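/- (Conditional Black–Scholes formula.) Let (Ω, F, P) be a probability space, G ⊆ F a sub-σ-algebra, M a G-measurable real random variable with e^M integrable, W a real random variable independent of G with standard Gaussian law N(0,1), Σ > 0 and κ ∈ ℝ. Then almost surely E[(e^{M + ΣW} − e^κ)^+ | G] = e^{M + Σ²/2} · Φ((M − κ + Σ²)/Σ) − e^κ · Φ((M − κ)/Σ). -/

import Mathlib

/-!
Since `M` is `G`-measurable and `W` is independent of `G`, the freezing lemma gives
`E[h(M, W) | G] = ∫ h(M, w) dN(0,1)(w)`. For fixed `m` the payoff `(e^{m + Sw} − e^κ)^+` is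
nonzero exactly for `w ≥ c = (κ − m)/S`, and completing the square turns `e^{Sw} φ(w)` into
`e^{S²/2} φ(w − S)`; the two remaining Gaussian tails are read off `Φ` by the symmetry of `N(0,1)`.
-/

open MeasureTheory ProbabilityTheory Real

/-- The standard normal cumulative distribution function
`Φ(x) = ∫_{−∞}^x e^{−t²/2}/√(2π) dt`. -/
noncomputable def stdNormalCDF (x : ℝ) : ℝ :=
  ∫ t in Set.Iic x, Real.exp (-t ^ 2 / 2) / Real.sqrt (2 * Real.pi)

open scoped NNReal

lemma stdNormalCDF_eq_measureReal (x : ℝ) :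
    stdNormalCDF x = (gaussianReal 0 1).real (Set.Iic x) := by
  rw [measureReal_def, gaussianReal_apply_eq_integral 0 one_ne_zero, ENNReal.toReal_ofReal
    (setIntegral_nonneg measurableSet_Iic fun t _ => gaussianPDFReal_nonneg 0 1 t)]
  refine setIntegral_congr_fun measurableSet_Iic fun t _ => ?_
  simp only [gaussianPDFReal, NNReal.coe_one, mul_one, sub_zero]
  ring

lemma gaussianReal_real_Ici_eq_stdNormalCDF (μ c : ℝ) :
    (gaussianReal μ 1).real (Set.Ici c) = stdNormalCDF (μ - c) := by
  have h : gaussianReal μ 1 = (gaussianReal 0 1).map (μ - ·) := by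
    rw [gaussianReal_map_const_sub, sub_zero]
  rw [h, map_measureReal_apply (by fun_prop) measurableSet_Ici, stdNormalCDF_eq_measureReal]
  congr 1
  ext x
  simp [le_sub_comm]

lemma exp_mul_mul_gaussianPDFReal (μ : ℝ) (v : ℝ≥0) (t x : ℝ) :
    exp (t * x) * gaussianPDFReal μ v x =
      exp (μ * t + v * t ^ 2 / 2) * gaussianPDFReal (μ + v * t) v x := by
  rcases eq_or_ne v 0 with rfl | hv
  · simp
  have hv' : (v : ℝ) ≠ 0 := by exact_mod_cast hv
  simp only [gaussianPDFReal]
  rw [mul_left_comm, mul_left_comm (exp _), ← exp_add, ← exp_add]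
  congr 2
  field_simp
  ring

lemma setIntegral_exp_mul_gaussianReal (μ : ℝ) {v : ℝ≥0} (hv : v ≠ 0) (t : ℝ) {s : Set ℝ}
    (hs : MeasurableSet s) :
    ∫ x in s, exp (t * x) ∂gaussianReal μ v =
      exp (μ * t + v * t ^ 2 / 2) * (gaussianReal (μ + v * t) v).real s := by
  rw [measureReal_def, gaussianReal_apply_eq_integral _ hv, ENNReal.toReal_ofReal
    (setIntegral_nonneg hs fun x _ => gaussianPDFReal_nonneg _ _ x), ← integral_const_mul,
    ← integral_indicator hs, ← integral_indicator hs, integral_gaussianReal_eq_integral_smul hv]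
  congr 1 with x
  by_cases hx : x ∈ s
  · simp [hx, mul_comm (gaussianPDFReal μ v x), exp_mul_mul_gaussianPDFReal]
  · simp [hx]

noncomputable def blackScholesCall (S κ m : ℝ) : ℝ :=
  exp (m + S ^ 2 / 2) * stdNormalCDF ((m - κ + S ^ 2) / S) -
    exp κ * stdNormalCDF ((m - κ) / S)

lemma max_exp_sub_exp_zero_eq_indicator {S : ℝ} (hS : 0 < S) (m κ w : ℝ) :
    max (exp (m + S * w) - exp κ) 0 =
      (Set.Ici ((κ - m) / S)).indicator (fun w => exp m * exp (S * w) - exp κ) w := by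
  by_cases hw : (κ - m) / S ≤ w
  · rw [Set.indicator_of_mem (Set.mem_Ici.2 hw), ← exp_add, max_eq_left]
    rw [div_le_iff₀' hS] at hw
    exact sub_nonneg.2 (exp_le_exp.2 (by linarith))
  · rw [Set.indicator_of_notMem (mt Set.mem_Ici.1 hw), max_eq_right]
    rw [div_le_iff₀' hS, not_le] at hw
    exact sub_nonpos.2 (exp_le_exp.2 (by linarith))

lemma integral_max_exp_sub_exp_gaussianReal {S : ℝ} (hS : 0 < S) (m κ : ℝ) :
    ∫ w, max (exp (m + S * w) - exp κ) 0 ∂gaussianReal 0 1 = blackScholesCall S κ m := by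
  simp_rw [max_exp_sub_exp_zero_eq_indicator hS]
  rw [integral_indicator measurableSet_Ici, integral_sub
      ((integrable_exp_mul_gaussianReal S).const_mul _).integrableOn (integrable_const _),
    integral_const_mul, setIntegral_exp_mul_gaussianReal 0 one_ne_zero S measurableSet_Ici,
    setIntegral_const, gaussianReal_real_Ici_eq_stdNormalCDF,
    gaussianReal_real_Ici_eq_stdNormalCDF, blackScholesCall]
  simp only [NNReal.coe_one, one_mul, zero_mul, zero_add, zero_sub, smul_eq_mul]
  have h₁ : S - (κ - m) / S = (m - κ + S ^ 2) / S := by field_simp; ring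
  have h₂ : -((κ - m) / S) = (m - κ) / S := by ring
  rw [h₁, h₂, exp_add]
  ring

namespace ProbabilityTheory

-- `G` precedes `mΩ` so that instance resolution picks the ambient σ-algebra `mΩ`.
variable {Ω β γ E : Type*} {G mΩ : MeasurableSpace Ω} [MeasurableSpace β] [MeasurableSpace γ]
  [NormedAddCommGroup E] [NormedSpace ℝ E] [CompleteSpace E]
  {P : Measure Ω} {Y : Ω → β} {W : Ω → γ} {f : β × γ → E}

lemma indepFun_of_indep_comap (hY : Measurable[G] Y)
    (hindep : Indep (MeasurableSpace.comap W inferInstance) G P) : IndepFun Y W P := by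
  rw [IndepFun_iff_Indep]
  exact indep_of_indep_of_le_left hindep.symm hY.comap_le

variable [IsFiniteMeasure P]

omit [NormedSpace ℝ E] [CompleteSpace E] in
lemma IndepFun.integrable_prod_of_integrable_comp (hind : IndepFun Y W P) (hY : Measurable Y)
    (hW : Measurable W) (hf : StronglyMeasurable f)
    (hfint : Integrable (fun ω => f (Y ω, W ω)) P) :
    Integrable f ((P.map Y).prod (P.map W)) := by
  rw [← hind.map_prod_eq_prod_map_map hY.aemeasurable hW.aemeasurable]
  exact (integrable_map_measure hf.aestronglyMeasurable (hY.prodMk hW).aemeasurable).2 hfint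

omit [CompleteSpace E] in
lemma IndepFun.integral_comp_prodMk (hind : IndepFun Y W P) (hY : Measurable Y)
    (hW : Measurable W) (hf : StronglyMeasurable f)
    (hfint : Integrable (fun ω => f (Y ω, W ω)) P) :
    ∫ ω, f (Y ω, W ω) ∂P = ∫ ω, ∫ w, f (Y ω, w) ∂(P.map W) ∂P := by
  calc ∫ ω, f (Y ω, W ω) ∂P
      = ∫ z, f z ∂(P.map fun ω => (Y ω, W ω)) :=
        (integral_map (hY.prodMk hW).aemeasurable hf.aestronglyMeasurable).symm
    _ = ∫ z, f z ∂((P.map Y).prod (P.map W)) := by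
        rw [hind.map_prod_eq_prod_map_map hY.aemeasurable hW.aemeasurable]
    _ = ∫ y, ∫ w, f (y, w) ∂(P.map W) ∂(P.map Y) :=
        integral_prod f (hind.integrable_prod_of_integrable_comp hY hW hf hfint)
    _ = ∫ ω, ∫ w, f (Y ω, w) ∂(P.map W) ∂P :=
        integral_map hY.aemeasurable hf.integral_prod_right'.aestronglyMeasurable

theorem condExp_comp_prodMk_ae_eq_integral (hG : G ≤ mΩ)
    (hY : Measurable[G] Y) (hW : Measurable W)
    (hindep : Indep (MeasurableSpace.comap W inferInstance) G P) (hf : StronglyMeasurable f)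
    (hfint : Integrable (fun ω => f (Y ω, W ω)) P) :
    P[fun ω => f (Y ω, W ω) | G] =ᵐ[P] fun ω => ∫ w, f (Y ω, w) ∂(P.map W) := by
  have hYΩ : Measurable Y := hY.mono hG le_rfl
  have hg : StronglyMeasurable fun y => ∫ w, f (y, w) ∂(P.map W) := hf.integral_prod_right'
  have hg_int : Integrable (fun ω => ∫ w, f (Y ω, w) ∂(P.map W)) P :=
    (integrable_map_measure hg.aestronglyMeasurable hYΩ.aemeasurable).1
      ((indepFun_of_indep_comap hY hindep).integrable_prod_of_integrable_comp hYΩ hW hf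
        hfint).integral_prod_left
  refine (ae_eq_condExp_of_forall_setIntegral_eq hG hfint (fun s _ _ => hg_int.integrableOn)
    (fun s hs _ => ?_) (hg.comp_measurable hY).aestronglyMeasurable).symm
  -- Pairing `Y` with the indicator of `s` reduces the set integrals to full integrals.
  have hY' : Measurable[G] fun ω => (Y ω, s.indicator (1 : Ω → ℝ) ω) :=
    hY.prodMk (measurable_const.indicator hs)
  have hf' : StronglyMeasurable fun p : (β × ℝ) × γ => p.1.2 • f (p.1.1, p.2) :=
    measurable_fst.snd.stronglyMeasurable.smul
      (hf.comp_measurable (measurable_fst.fst.prodMk measurable_snd))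
  have hsmul : ∀ h : Ω → E, ∫ ω in s, h ω ∂P = ∫ ω, s.indicator (1 : Ω → ℝ) ω • h ω ∂P := by
    intro h
    rw [← integral_indicator (hG s hs)]
    congr 1 with ω
    by_cases hω : ω ∈ s <;> simp [hω]
  have key := (indepFun_of_indep_comap hY' hindep).integral_comp_prodMk (hY'.mono hG le_rfl) hW
    hf' ((hfint.indicator (hG s hs)).congr (ae_of_all _ fun ω => by
      by_cases hω : ω ∈ s <;> simp [hω]))
  simp only [integral_smul] at key
  rw [hsmul, hsmul, key]

end ProbabilityTheory

/-- **Conditional Black–Scholes formula.** If `M` is `G`-measurable with `e^M` integrable,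
`W` is independent of `G` with standard Gaussian law `N(0,1)`, `S > 0` (playing the role
of Σ) and `κ ∈ ℝ`, then almost surely
`E[(e^{M + SW} − e^κ)^+ | G] = e^{M + S²/2} Φ((M − κ + S²)/S) − e^κ Φ((M − κ)/S)`. -/
theorem stmt_4 {Ω : Type*} {F : MeasurableSpace Ω} (P : Measure Ω) [IsProbabilityMeasure P]
    (G : MeasurableSpace Ω) (hG : G ≤ F)
    (M : Ω → ℝ) (hM : Measurable[G] M) (hMint : Integrable (fun ω => Real.exp (M ω)) P)
    (W : Ω → ℝ) (hW : Measurable[F] W)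
    (hindep : Indep (MeasurableSpace.comap W inferInstance) G P)
    (hlaw : @Measure.map Ω ℝ F _ W P = gaussianReal 0 1)
    (S : ℝ) (hS : 0 < S) (κ : ℝ) :
    P[fun ω => max (Real.exp (M ω + S * W ω) - Real.exp κ) 0 | G] =ᵐ[P]
      fun ω => Real.exp (M ω + S ^ 2 / 2) * stdNormalCDF ((M ω - κ + S ^ 2) / S) -
        Real.exp κ * stdNormalCDF ((M ω - κ) / S) := by
  have hexpW : Integrable (fun ω => exp (S * W ω)) P :=
    (integrable_map_measure (g := fun x => exp (S * x)) (by fun_prop) hW.aemeasurable).1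
      (hlaw ▸ integrable_exp_mul_gaussianReal S)
  have hprod : Integrable (fun ω => exp (M ω) * exp (S * W ω)) P :=
    ((indepFun_of_indep_comap hM hindep).comp measurable_exp
      (measurable_const_mul S).exp).integrable_mul hMint hexpW
  have hpayoff : Integrable (fun ω => max (exp (M ω + S * W ω) - exp κ) 0) P := by
    have hMF : Measurable[F] M := hM.mono hG le_rfl
    refine hprod.mono' (by fun_prop) (ae_of_all _ fun ω => ?_)
    rw [Real.norm_of_nonneg (le_max_right _ _), ← exp_add]
    exact max_le (by linarith [exp_pos κ]) (exp_pos _).le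
  filter_upwards [condExp_comp_prodMk_ae_eq_integral hG hM hW hindep
    (f := fun p : ℝ × ℝ => max (exp (p.1 + S * p.2) - exp κ) 0) (by fun_prop) hpayoff]
    with ω hω
  rw [hω, hlaw, integral_max_exp_sub_exp_gaussianReal hS]
  rfl
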